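/- Let k be a field of characteristic zero, a_0 ∈ k^×, and f = a_0 + Σ_{i≥1} a_i t^i ∈ k[[t]]. Set u := exp(Σ_{i≥1} (a_i/(i·a_0)) t^i) ∈ k[[t]] and s := t·u. Then u has constant term 1, s has order exactly 1, and f(t)·s(t) = a_0·t·s'(t) in k[[t]]; equivalently, f dt/t = a_0 ds/s as formal differentials. -/

import Mathlib

open PowerSeries

variable {k : Type*} [Field k]

/-- Formal exponential `exp f = Σ_{n≥0} f^n/n!` of a power series (intended for `f`
with zero constant term, where the defining sum is `t`-adically convergent). -/
noncomputable def PowerSeries.pexp (f : PowerSeries k) : PowerSeries k :=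
  PowerSeries.mk fun m => ∑ n ∈ Finset.range (m + 1),
    (Nat.factorial n : k)⁻¹ * coeff m (f ^ n)

/-! With `g = Σ_{i≥1} a_i t^i / (i a_0)` one has `f = a_0 (1 + t g')`. Since `g` has no constant
term, `pexp g` is the substitution of `g` into `exp`, so the chain rule gives `u' = g' u`, hence
`s' = u + t g' u = (1 + t g') u` and `a_0 t s' = f s`. -/

namespace PowerSeries

theorem coeff_pow_eq_zero_of_lt {g : PowerSeries k} (hg : constantCoeff g = 0) {m n : ℕ}
    (h : m < n) : coeff m (g ^ n) = 0 :=
  X_pow_dvd_iff.mp (pow_dvd_pow_of_dvd (X_dvd_iff.mpr hg) n) m h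

theorem constantCoeff_pexp (g : PowerSeries k) : constantCoeff g.pexp = 1 := by
  rw [← coeff_zero_eq_constantCoeff_apply, pexp, coeff_mk]
  simp

theorem pexp_eq_subst_exp [CharZero k] {g : PowerSeries k} (hg : constantCoeff g = 0) :
    g.pexp = (exp k).subst g := by
  ext m
  have hsupp : Function.support (fun d ↦ coeff d (exp k) • coeff m (g ^ d)) ⊆
      ↑(Finset.range (m + 1)) := fun d hd ↦ by
    by_contra hlt
    simp only [Finset.coe_range, Set.mem_Iio, not_lt] at hlt
    exact hd (by dsimp only; rw [coeff_pow_eq_zero_of_lt hg (by omega), smul_zero])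
  rw [coeff_subst' (HasSubst.of_constantCoeff_zero' hg), finsum_eq_sum_of_support_subset _ hsupp,
    pexp, coeff_mk]
  simp [coeff_exp]

theorem derivative_pexp [CharZero k] {g : PowerSeries k} (hg : constantCoeff g = 0) :
    d⁄dX k g.pexp = d⁄dX k g * g.pexp := by
  rw [pexp_eq_subst_exp hg, derivative_subst (HasSubst.of_constantCoeff_zero' hg),
    derivative_exp, mul_comm]

theorem derivative_X_mul_pexp [CharZero k] {g : PowerSeries k} (hg : constantCoeff g = 0) :
    d⁄dX k (X * g.pexp) = (1 + X * d⁄dX k g) * g.pexp := by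
  rw [Derivation.leibniz, derivative_pexp hg, derivative_X, smul_eq_mul, smul_eq_mul]
  ring

theorem coeff_X_mul_derivative (g : PowerSeries k) (n : ℕ) :
    coeff n (X * d⁄dX k g) = n * coeff n g := by
  cases n with
  | zero => simp
  | succ n => rw [coeff_succ_X_mul, coeff_derivative, mul_comm, Nat.cast_succ]

theorem eq_C_mul_one_add_X_mul_derivative [CharZero k] {a0 : k} (ha0 : a0 ≠ 0)
    {f : PowerSeries k} (hf : constantCoeff f = a0) :
    f = C a0 *
      (1 + X * d⁄dX k (mk fun i => if i = 0 then 0 else coeff i f * ((i : k) * a0)⁻¹)) := by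
  ext n
  rw [coeff_C_mul, map_add, coeff_X_mul_derivative, coeff_mk, coeff_one]
  rcases Nat.eq_zero_or_pos n with rfl | hn
  · simp [hf]
  · have hn' : (n : k) ≠ 0 := Nat.cast_ne_zero.mpr hn.ne'
    rw [if_neg hn.ne', if_neg hn.ne']
    field_simp
    ring

end PowerSeries

/-- the explicit good coordinate in the slope-zero case. For
`f = a_0 + Σ_{i≥1} a_i t^i` with `a_0 ≠ 0`, the unit `u := exp(Σ_{i≥1} (a_i/(i·a_0)) t^i)`
has constant term `1`, `s := t·u` has order exactly `1`, and `f(t)·s(t) = a_0·t·s'(t)`,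
i.e. `f dt/t = a_0 ds/s`. -/
theorem explicit_good_coordinate_slope_zero [CharZero k]
    (a0 : k) (ha0 : a0 ≠ 0) (f : PowerSeries k) (hf : constantCoeff f = a0) :
    let u : PowerSeries k :=
      (PowerSeries.mk fun i => if i = 0 then 0 else
        coeff i f * ((i : k) * a0)⁻¹).pexp
    let s : PowerSeries k := X * u
    constantCoeff u = 1 ∧ constantCoeff s = 0 ∧ coeff 1 s ≠ 0 ∧
      f * s = PowerSeries.C a0 * X * s.derivativeFun := by
  intro u s
  set g : PowerSeries k := PowerSeries.mk fun i => if i = 0 then 0 else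
    coeff i f * ((i : k) * a0)⁻¹
  have hg : constantCoeff g = 0 := by
    rw [← coeff_zero_eq_constantCoeff_apply, coeff_mk, if_pos rfl]
  have hu : constantCoeff u = 1 := constantCoeff_pexp g
  refine ⟨hu, by simp [s], by simp [s, hu], ?_⟩
  change f * (X * g.pexp) = C a0 * X * d⁄dX k (X * g.pexp)
  rw [derivative_X_mul_pexp hg, eq_C_mul_one_add_X_mul_derivative ha0 hf]
  ring
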